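/- The stationary peakon solution π_n = exp(−|n|) of the discrete Klein–Gordon lattice equation is unstable with respect to ℓ²-perturbations of the initial data: there exists ε > 0 such that for every δ > 0 there exist initial data (u₀, v₀) ∈ ℓ²(ℤ,ℝ) × ℓ²(ℤ,ℝ) with ‖u₀ − π‖_{ℓ²} + ‖v₀‖_{ℓ²} < δ, a twice continuously differentiable solution u : [0,∞) → ℓ²(ℤ,ℝ) of the equation with u(0) = u₀, u̇(0) = v₀, and a time t > 0 with ‖u(t) − π‖_{ℓ²} ≥ ε. -/

import Mathlib

/-- `Λ = (e²+1)/(e²−1)`. -/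
noncomputable def Lam : ℝ := (Real.exp 1 ^ 2 + 1) / (Real.exp 1 ^ 2 - 1)

def IsKGSolution (u : ℝ → lp (fun _ : ℤ => ℝ) 2) : Prop :=
  ContDiffOn ℝ 2 u (Set.Ici 0) ∧
  ∀ t ∈ Set.Ici (0 : ℝ), ∀ n : ℤ,
    derivWithin (fun s => derivWithin u (Set.Ici 0) s) (Set.Ici 0) t n
      = (∑' m : ℤ, Real.exp (-|(n : ℝ) - (m : ℝ)|) * u t m)
        - (Lam - (1 / 2) * Real.log ((u t n) ^ 2)) * u t n

section Aux
open Real Set Filter intervalIntegral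

noncomputable def Qf (β s : ℝ) : ℝ := s^2 * Real.log s - s^2/2 + 1/2 + β^2
noncomputable def Gf (β s : ℝ) : ℝ := (Real.sqrt (Qf β (max s 1)))⁻¹
noncomputable def Tf (β x : ℝ) : ℝ := ∫ s in (1:ℝ)..x, Gf β s

lemma Qf_one (β : ℝ) : Qf β 1 = β ^ 2 := by simp [Qf]

lemma psi_hasDeriv {s : ℝ} (hs : 0 < s) :
    HasDerivAt (fun x : ℝ => x^2 * Real.log x - x^2/2 + 1/2) (2 * s * Real.log s) s := by
  have h1 : HasDerivAt (fun x : ℝ => x^2 * Real.log x)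
      (2 * s * Real.log s + s^2 * s⁻¹) s :=
    (hasDerivAt_pow 2 s).mul (Real.hasDerivAt_log hs.ne') |>.congr_deriv (by ring)
  have h2 : HasDerivAt (fun x : ℝ => x^2/2) s s := by
    simpa using (hasDerivAt_pow 2 s).div_const 2 |>.congr_deriv (by ring)
  have := (h1.sub h2).add_const (1/2 : ℝ)
  refine this.congr_deriv ?_
  field_simp
  ring

lemma psi_nonneg {s : ℝ} (hs : 1 ≤ s) : 0 ≤ s^2 * Real.log s - s^2/2 + 1/2 := by
  set ψ : ℝ → ℝ := fun x => x^2 * Real.log x - x^2/2 + 1/2 with hψ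
  have hmono : MonotoneOn ψ (Ici 1) := by
    apply monotoneOn_of_deriv_nonneg (convex_Ici 1)
    · intro x hx
      have hx1 : (1:ℝ) ≤ x := hx
      exact ((psi_hasDeriv (by linarith : (0:ℝ) < x)).continuousAt.continuousWithinAt)
    · intro x hx
      exact ((psi_hasDeriv (by simp at hx; linarith)).differentiableAt.differentiableWithinAt)
    · intro x hx
      simp only [interior_Ici, mem_Ioi] at hx
      rw [(psi_hasDeriv (by linarith)).deriv]
      have : 0 ≤ Real.log x := Real.log_nonneg (le_of_lt hx)
      positivity
  have h1 : ψ 1 ≤ ψ s := hmono (by simp) (by simpa using hs) hs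
  simp only [hψ] at h1
  norm_num [Real.log_one] at h1
  linarith

lemma Qf_ge {β s : ℝ} (hs : 1 ≤ s) : β ^ 2 ≤ Qf β s := by
  have := psi_nonneg hs
  simp only [Qf]; linarith

lemma Qf_max_pos {β : ℝ} (hβ : 0 < β) (s : ℝ) : 0 < Qf β (max s 1) := by
  have := Qf_ge (β := β) (le_max_right s 1)
  nlinarith

lemma sqrt_Qf_pos {β : ℝ} (hβ : 0 < β) (s : ℝ) : 0 < Real.sqrt (Qf β (max s 1)) :=
  Real.sqrt_pos.mpr (Qf_max_pos hβ s)

lemma Gf_pos {β : ℝ} (hβ : 0 < β) (s : ℝ) : 0 < Gf β s :=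
  inv_pos.mpr (sqrt_Qf_pos hβ s)

lemma continuous_Qf_max (β : ℝ) : Continuous (fun s : ℝ => Qf β (max s 1)) := by
  have hmax : Continuous (fun s : ℝ => max s 1) := continuous_id.max continuous_const
  have hlog : Continuous (fun s : ℝ => Real.log (max s 1)) := by
    apply Continuous.log hmax
    intro x; positivity
  unfold Qf
  fun_prop (disch := skip)
  

lemma continuous_Gf {β : ℝ} (hβ : 0 < β) : Continuous (Gf β) := by
  unfold Gf
  exact ((continuous_Qf_max β).sqrt).inv₀ (fun s => (sqrt_Qf_pos hβ s).ne')

lemma intervalIntegrable_Gf {β : ℝ} (hβ : 0 < β) (a b : ℝ) :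
    IntervalIntegrable (Gf β) MeasureTheory.volume a b :=
  (continuous_Gf hβ).intervalIntegrable a b

lemma hasDerivAt_Tf {β : ℝ} (hβ : 0 < β) (x : ℝ) : HasDerivAt (Tf β) (Gf β x) x := by
  exact intervalIntegral.integral_hasDerivAt_right (intervalIntegrable_Gf hβ 1 x)
    ((continuous_Gf hβ).stronglyMeasurable.stronglyMeasurableAtFilter)
    (continuous_Gf hβ).continuousAt

lemma strictMono_Tf {β : ℝ} (hβ : 0 < β) : StrictMono (Tf β) := by
  intro x y hxy
  have h : Tf β y - Tf β x = ∫ s in x..y, Gf β s := by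
    rw [Tf, Tf, ← intervalIntegral.integral_add_adjacent_intervals
      (intervalIntegrable_Gf hβ 1 x) (intervalIntegrable_Gf hβ x y)]
    ring
  have hpos : 0 < ∫ s in x..y, Gf β s :=
    intervalIntegral.intervalIntegral_pos_of_pos (intervalIntegrable_Gf hβ x y)
      (Gf_pos hβ) hxy
  linarith

lemma Tf_one (β : ℝ) : Tf β 1 = 0 := by simp [Tf]

lemma Gf_of_le_one {β : ℝ} (hβ : 0 < β) {s : ℝ} (hs : s ≤ 1) : Gf β s = β⁻¹ := by
  rw [Gf, max_eq_right hs, Qf_one, Real.sqrt_sq hβ.le]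

lemma Tf_of_le_one {β : ℝ} (hβ : 0 < β) {x : ℝ} (hx : x ≤ 1) :
    Tf β x = (x - 1) * β⁻¹ := by
  rw [Tf]
  rw [intervalIntegral.integral_congr (g := fun _ => β⁻¹)
    (fun s hs => by
      apply Gf_of_le_one hβ
      rcases le_total x 1 with h | h
      · rw [Set.uIcc_of_ge h] at hs; exact hs.2
      · rw [Set.uIcc_of_le h] at hs; linarith [hs.1, hs.2])]
  simp [mul_comm]

lemma tendsto_Tf_atBot {β : ℝ} (hβ : 0 < β) : Tendsto (Tf β) atBot atBot := by
  have h : ∀ᶠ x in atBot, Tf β x = (x - 1) * β⁻¹ :=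
    eventually_atBot.mpr ⟨1, fun x hx => Tf_of_le_one hβ hx⟩
  apply Tendsto.congr' (h.mono fun x hx => hx.symm)
  exact Tendsto.atBot_mul_const (inv_pos.mpr hβ)
    (tendsto_atBot_add_const_right _ (-1 : ℝ) tendsto_id)

lemma tendsto_sqrt_atTop : Tendsto Real.sqrt atTop atTop := by
  rw [tendsto_atTop_atTop]
  intro b
  refine ⟨b^2 ⊔ 1, fun a ha => ?_⟩
  have h1 : b^2 ≤ a := le_trans le_sup_left ha
  rcases le_total b 0 with hb | hb
  · exact hb.trans (Real.sqrt_nonneg a)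
  · rw [show b = Real.sqrt (b^2) by rw [Real.sqrt_sq hb]]
    exact Real.sqrt_le_sqrt h1

lemma rho_hasDeriv {c s : ℝ} (hc : 0 < c) (hs : 1 ≤ s) :
    HasDerivAt (fun x : ℝ => 2 * Real.sqrt (Real.log x + c))
      ((s * Real.sqrt (Real.log s + c))⁻¹) s := by
  have hs0 : (0:ℝ) < s := lt_of_lt_of_le one_pos hs
  have hlc : 0 < Real.log s + c := by
    have := Real.log_nonneg hs; linarith
  have h1 : HasDerivAt (fun x : ℝ => Real.log x + c) s⁻¹ s :=
    (Real.hasDerivAt_log hs0.ne').add_const c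
  have h2 : HasDerivAt Real.sqrt (1 / (2 * Real.sqrt (Real.log s + c))) (Real.log s + c) :=
    Real.hasDerivAt_sqrt hlc.ne'
  have h3 := (h2.comp s h1).const_mul (2:ℝ)
  refine h3.congr_deriv ?_
  have hsq : Real.sqrt (Real.log s + c) > 0 := Real.sqrt_pos.mpr hlc
  field_simp

lemma Gf_ge_rho' {β s : ℝ} (hβ : 0 < β) (hs : 1 ≤ s) :
    (s * Real.sqrt (Real.log s + (1 + β^2)))⁻¹ ≤ Gf β s := by
  have hs0 : (0:ℝ) < s := lt_of_lt_of_le one_pos hs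
  have hlc : 0 < Real.log s + (1 + β^2) := by
    have := Real.log_nonneg hs; positivity
  rw [Gf, max_eq_left hs]
  apply inv_anti₀ (sqrt_Qf_pos hβ s |>.trans_le (by rw [max_eq_left hs]))
  · calc Real.sqrt (Qf β s) ≤ Real.sqrt (s^2 * (Real.log s + (1 + β^2))) := by
          apply Real.sqrt_le_sqrt
          have hl := Real.log_nonneg hs
          simp only [Qf]
          have hs2 : 1 ≤ s^2 := one_le_pow₀ hs
          have hb2 : β^2 ≤ s^2 * β^2 := le_mul_of_one_le_left (sq_nonneg β) hs2
          nlinarith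
        _ = s * Real.sqrt (Real.log s + (1 + β^2)) := by
          rw [Real.sqrt_mul (by positivity), Real.sqrt_sq hs0.le]

lemma Tf_ge {β x : ℝ} (hβ : 0 < β) (hx : 1 ≤ x) :
    2 * Real.sqrt (Real.log x + (1 + β^2)) - 2 * Real.sqrt (1 + β^2) ≤ Tf β x := by
  set c : ℝ := 1 + β^2 with hc
  have hc0 : 0 < c := by positivity
  have hrhocont : ContinuousOn (fun s : ℝ => (s * Real.sqrt (Real.log s + c))⁻¹) (Icc 1 x) := by
    intro s hs
    have hs0 : (0:ℝ) < s := lt_of_lt_of_le one_pos hs.1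
    have hlc : 0 < Real.log s + c := by have := Real.log_nonneg hs.1; linarith
    have hca : ContinuousAt (fun s : ℝ => (s * Real.sqrt (Real.log s + c))⁻¹) s := by
      apply ContinuousAt.inv₀
      · exact continuousAt_id.mul (Real.continuous_sqrt.continuousAt.comp
          ((Real.continuousAt_log hs0.ne').add continuousAt_const))
      · have : 0 < Real.sqrt (Real.log s + c) := Real.sqrt_pos.mpr hlc
        positivity
    exact hca.continuousWithinAt
  have hint : IntervalIntegrable (fun s : ℝ => (s * Real.sqrt (Real.log s + c))⁻¹)
      MeasureTheory.volume 1 x := by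
    rw [intervalIntegrable_iff_integrableOn_Icc_of_le hx]
    exact hrhocont.integrableOn_compact isCompact_Icc
  have heq : ∫ s in (1:ℝ)..x, (s * Real.sqrt (Real.log s + c))⁻¹
      = 2 * Real.sqrt (Real.log x + c) - 2 * Real.sqrt (Real.log 1 + c) := by
    apply intervalIntegral.integral_eq_sub_of_hasDerivAt
    · intro s hs
      rw [Set.uIcc_of_le hx] at hs
      exact rho_hasDeriv hc0 hs.1
    · exact hint
  have hmono : ∫ s in (1:ℝ)..x, (s * Real.sqrt (Real.log s + c))⁻¹ ≤ Tf β x := by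
    apply intervalIntegral.integral_mono_on hx hint (intervalIntegrable_Gf hβ 1 x)
    intro s hs
    exact Gf_ge_rho' hβ hs.1
  rw [heq] at hmono
  simpa using hmono

lemma tendsto_Tf_atTop {β : ℝ} (hβ : 0 < β) : Tendsto (Tf β) atTop atTop := by
  set c : ℝ := 1 + β^2 with hc
  have h1 : Tendsto (fun x : ℝ => 2 * Real.sqrt (Real.log x + c) - 2 * Real.sqrt c)
      atTop atTop := by
    apply tendsto_atTop_add_const_right
    apply Tendsto.const_mul_atTop two_pos
    exact _root_.tendsto_sqrt_atTop.comp
      (tendsto_atTop_add_const_right _ c Real.tendsto_log_atTop)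
  apply tendsto_atTop_mono' _ _ h1
  filter_upwards [eventually_ge_atTop (1:ℝ)] with x hx
  exact Tf_ge hβ hx

lemma continuous_Tf {β : ℝ} (hβ : 0 < β) : Continuous (Tf β) := by
  have : Differentiable ℝ (Tf β) := fun x => (hasDerivAt_Tf hβ x).differentiableAt
  exact this.continuous

lemma surjective_Tf {β : ℝ} (hβ : 0 < β) : Function.Surjective (Tf β) :=
  (continuous_Tf hβ).surjective (tendsto_Tf_atTop hβ) (tendsto_Tf_atBot hβ)

/-- The solution `a(t)` of the scalar ODE, defined as the inverse of `Tf β`. -/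
noncomputable def aF (β : ℝ) (hβ : 0 < β) : ℝ → ℝ :=
  fun t => (StrictMono.orderIsoOfSurjective (Tf β) (strictMono_Tf hβ) (surjective_Tf hβ)).symm t

lemma aF_Tf {β : ℝ} (hβ : 0 < β) (x : ℝ) : aF β hβ (Tf β x) = x :=
  StrictMono.orderIsoOfSurjective_symm_apply_self (Tf β) (strictMono_Tf hβ) (surjective_Tf hβ) x

lemma Tf_aF {β : ℝ} (hβ : 0 < β) (t : ℝ) : Tf β (aF β hβ t) = t :=
  StrictMono.orderIsoOfSurjective_self_symm_apply (Tf β) (strictMono_Tf hβ) (surjective_Tf hβ) t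

lemma monotone_aF {β : ℝ} (hβ : 0 < β) : Monotone (aF β hβ) :=
  fun _ _ h => (StrictMono.orderIsoOfSurjective (Tf β) (strictMono_Tf hβ)
    (surjective_Tf hβ)).symm.monotone h

lemma continuous_aF {β : ℝ} (hβ : 0 < β) : Continuous (aF β hβ) :=
  (StrictMono.orderIsoOfSurjective (Tf β) (strictMono_Tf hβ)
    (surjective_Tf hβ)).symm.continuous

lemma aF_zero {β : ℝ} (hβ : 0 < β) : aF β hβ 0 = 1 := by
  have := aF_Tf hβ 1
  rwa [Tf_one] at this

lemma aF_ge_one {β : ℝ} (hβ : 0 < β) {t : ℝ} (ht : 0 ≤ t) : 1 ≤ aF β hβ t := by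
  have := monotone_aF hβ ht
  rwa [aF_zero hβ] at this

lemma hasDerivAt_aF {β : ℝ} (hβ : 0 < β) (t : ℝ) :
    HasDerivAt (aF β hβ) (Real.sqrt (Qf β (max (aF β hβ t) 1))) t := by
  have h := HasDerivAt.of_local_left_inverse (f := Tf β) (g := aF β hβ)
    ((continuous_aF hβ).continuousAt)
    (hasDerivAt_Tf hβ (aF β hβ t))
    (Gf_pos hβ _).ne'
    (Filter.Eventually.of_forall (Tf_aF hβ))
  simpa [Gf, inv_inv] using h

lemma Qf_hasDeriv (β : ℝ) {s : ℝ} (hs : 0 < s) :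
    HasDerivAt (Qf β) (2 * s * Real.log s) s := by
  have h := (psi_hasDeriv hs).add_const (β^2)
  exact h.congr_deriv rfl

lemma hasDerivAt_aF' {β : ℝ} (hβ : 0 < β) {t : ℝ} (ht : 0 ≤ t) :
    HasDerivAt (aF β hβ) (Real.sqrt (Qf β (aF β hβ t))) t := by
  have h := hasDerivAt_aF hβ t
  rwa [max_eq_left (aF_ge_one hβ ht)] at h

lemma hasDerivAt_phi {β : ℝ} (hβ : 0 < β) {t : ℝ} (ht : 0 ≤ t) :
    HasDerivAt (fun s => Real.sqrt (Qf β (aF β hβ s)))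
      (aF β hβ t * Real.log (aF β hβ t)) t := by
  have ha1 : 1 ≤ aF β hβ t := aF_ge_one hβ ht
  have hQpos : 0 < Qf β (aF β hβ t) := by
    have := Qf_ge (β := β) ha1; nlinarith
  have h1 := hasDerivAt_aF hβ t
  have h2 := Qf_hasDeriv β (lt_of_lt_of_le one_pos ha1)
  have h3 := Real.hasDerivAt_sqrt hQpos.ne'
  have hmax : max (aF β hβ t) 1 = aF β hβ t := max_eq_left ha1
  rw [hmax] at h1
  have h23 : HasDerivAt (fun x => Real.sqrt (Qf β x))
      (1 / (2 * Real.sqrt (Qf β (aF β hβ t))) * (2 * aF β hβ t * Real.log (aF β hβ t)))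
      (aF β hβ t) := h3.comp _ h2
  have h := h23.comp t h1
  refine h.congr_deriv ?_
  have hsq : 0 < Real.sqrt (Qf β (aF β hβ t)) := Real.sqrt_pos.mpr hQpos
  field_simp


open Real Set Filter

lemma expsq_gt_one : 1 < Real.exp 1 ^ 2 := by
  nlinarith [Real.exp_one_gt_d9]

lemma geo_hasSum : HasSum (fun k : ℕ => Real.exp (-2) ^ (k+1)) (1 / (Real.exp 1 ^ 2 - 1)) := by
  have hr0 : (0:ℝ) ≤ Real.exp (-2) := (Real.exp_pos _).le
  have hr1 : Real.exp (-2) < 1 := Real.exp_lt_one_iff.mpr (by norm_num)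
  have h := (hasSum_geometric_of_lt_one hr0 hr1).mul_left (Real.exp (-2))
  have heq : (fun k : ℕ => Real.exp (-2) * Real.exp (-2) ^ k)
      = fun k : ℕ => Real.exp (-2) ^ (k+1) := by
    funext k; rw [pow_succ]; ring
  rw [heq] at h
  suffices hv : 1 / (Real.exp 1 ^ 2 - 1) = Real.exp (-2) * (1 - Real.exp (-2))⁻¹ by rw [hv]; exact h
  have hE : Real.exp 1 ^ 2 = Real.exp 2 := by
    rw [← Real.exp_nat_mul]; norm_num
  have h2 : Real.exp (-2) = (Real.exp 2)⁻¹ := by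
    rw [← Real.exp_neg]
  have hEpos : (0:ℝ) < Real.exp 2 := Real.exp_pos 2
  have hEne : Real.exp 2 - 1 ≠ 0 := by
    have : 1 < Real.exp 2 := by rw [← hE]; exact expsq_gt_one
    linarith
  rw [hE, h2]
  field_simp

lemma term_neg (n k : ℕ) :
    Real.exp (-|(n:ℝ) - ((-((k:ℤ)+1) : ℤ):ℝ)|) * Real.exp (-|((-((k:ℤ)+1) : ℤ):ℝ)|)
      = Real.exp (-(n:ℝ)) * Real.exp (-2) ^ (k+1) := by
  have h1 : ((-((k:ℤ)+1) : ℤ):ℝ) = -((k:ℝ)+1) := by push_cast; ring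
  rw [h1]
  have h2 : |(n:ℝ) - (-((k:ℝ)+1))| = (n:ℝ) + (k:ℝ) + 1 := by
    rw [abs_of_nonneg (by
      have hn : (0:ℝ) ≤ (n:ℝ) := Nat.cast_nonneg n
      have hk : (0:ℝ) ≤ (k:ℝ) := Nat.cast_nonneg k
      linarith)]; ring
  have h3 : |(-((k:ℝ)+1))| = (k:ℝ) + 1 := by
    rw [abs_neg, abs_of_nonneg (by positivity)]
  rw [h2, h3, ← Real.exp_add]
  have h4 : Real.exp (-2) ^ (k+1) = Real.exp ((-2) * ((k:ℝ)+1)) := by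
    rw [← Real.exp_nat_mul]; push_cast; ring_nf
  rw [h4, ← Real.exp_add]
  ring_nf

lemma term_shift (n k : ℕ) :
    Real.exp (-|(n:ℝ) - (((k + (n+1) : ℕ) : ℤ):ℝ)|) * Real.exp (-|(((k + (n+1) : ℕ):ℤ):ℝ)|)
      = Real.exp (-(n:ℝ)) * Real.exp (-2) ^ (k+1) := by
  have h1 : (((k + (n+1) : ℕ):ℤ):ℝ) = (k:ℝ) + (n:ℝ) + 1 := by push_cast; ring
  rw [h1]
  have h2 : |(n:ℝ) - ((k:ℝ) + (n:ℝ) + 1)| = (k:ℝ) + 1 := by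
    rw [show (n:ℝ) - ((k:ℝ) + (n:ℝ) + 1) = -((k:ℝ)+1) by ring, abs_neg,
      abs_of_nonneg (by positivity)]
  have h3 : |(k:ℝ) + (n:ℝ) + 1| = (k:ℝ) + (n:ℝ) + 1 := abs_of_nonneg (by positivity)
  rw [h2, h3, ← Real.exp_add]
  have h4 : Real.exp (-2) ^ (k+1) = Real.exp ((-2) * ((k:ℝ)+1)) := by
    rw [← Real.exp_nat_mul]; push_cast; ring_nf
  rw [h4, ← Real.exp_add]
  ring_nf

lemma keyN (n : ℕ) :
    HasSum (fun m : ℤ => Real.exp (-|(n:ℝ) - (m:ℝ)|) * Real.exp (-|(m:ℝ)|))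
      ((Lam + n) * Real.exp (-(n:ℝ))) := by
  set r : ℝ := 1 / (Real.exp 1 ^ 2 - 1) with hrdef
  set f : ℤ → ℝ := fun m => Real.exp (-|(n:ℝ) - (m:ℝ)|) * Real.exp (-|(m:ℝ)|) with hfdef
  have hgeo := geo_hasSum.mul_left (Real.exp (-(n:ℝ)))
  -- negative part
  have hneg : HasSum (fun k : ℕ => f (-((k:ℤ)+1))) (Real.exp (-(n:ℝ)) * r) := by
    have heq : (fun k : ℕ => f (-((k:ℤ)+1)))
        = fun k : ℕ => Real.exp (-(n:ℝ)) * Real.exp (-2) ^ (k+1) :=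
      funext fun k => term_neg n k
    rw [heq]; exact hgeo
  -- nonnegative part
  have hshift : HasSum (fun k : ℕ => f ((k + (n+1) : ℕ) : ℤ)) (Real.exp (-(n:ℝ)) * r) := by
    have heq : (fun k : ℕ => f ((k + (n+1) : ℕ) : ℤ))
        = fun k : ℕ => Real.exp (-(n:ℝ)) * Real.exp (-2) ^ (k+1) :=
      funext fun k => term_shift n k
    rw [heq]; exact hgeo
  have hterm : ∀ i ∈ Finset.range (n+1), f (i : ℤ) = Real.exp (-(n:ℝ)) := by
    intro i hi
    have hi' : (i:ℝ) ≤ (n:ℝ) := by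
      exact_mod_cast Nat.lt_succ_iff.mp (Finset.mem_range.mp hi)
    have hi0 : (0:ℝ) ≤ (i:ℝ) := Nat.cast_nonneg i
    simp only [hfdef, Int.cast_natCast]
    rw [abs_of_nonneg (by linarith), abs_of_nonneg hi0, ← Real.exp_add]
    ring_nf
  have hsum : ∑ i ∈ Finset.range (n+1), f (i : ℤ) = ((n:ℝ)+1) * Real.exp (-(n:ℝ)) := by
    rw [Finset.sum_congr rfl hterm, Finset.sum_const, Finset.card_range, nsmul_eq_mul]
    push_cast; ring
  have hnat : HasSum (fun k : ℕ => f (k : ℤ))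
      (Real.exp (-(n:ℝ)) * r + ∑ i ∈ Finset.range (n+1), f (i : ℤ)) :=
    (hasSum_nat_add_iff (n+1)).mp hshift
  have htot := hnat.of_nat_of_neg_add_one hneg
  convert htot using 1
  rw [hsum, hrdef]
  have hEne : Real.exp 1 ^ 2 - 1 ≠ 0 := by have := expsq_gt_one; linarith
  have hLam : Lam = 1 + 2 * (1 / (Real.exp 1 ^ 2 - 1)) := by
    rw [Lam, mul_one_div, add_div' _ _ _ hEne, div_eq_div_iff hEne hEne]
    ring
  rw [hLam]
  ring

lemma keyZ (n : ℤ) :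
    HasSum (fun m : ℤ => Real.exp (-|(n:ℝ) - (m:ℝ)|) * Real.exp (-|(m:ℝ)|))
      ((Lam + |(n:ℝ)|) * Real.exp (-|(n:ℝ)|)) := by
  rcases le_or_gt 0 n with hn | hn
  · obtain ⟨p, rfl⟩ : ∃ p : ℕ, n = (p:ℤ) := ⟨n.toNat, (Int.toNat_of_nonneg hn).symm⟩
    have habs : |((p:ℤ):ℝ)| = ((p:ℤ):ℝ) := abs_of_nonneg (by positivity)
    rw [habs]
    have := keyN p
    convert this using 2 <;> push_cast <;> ring
  · obtain ⟨p, hp⟩ : ∃ p : ℕ, n = -(p:ℤ) := ⟨(-n).toNat, by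
      rw [Int.toNat_of_nonneg (by omega)]; ring⟩
    subst hp
    have h := keyN p
    have habs : |((-(p:ℤ) : ℤ):ℝ)| = (p:ℝ) := by
      push_cast; rw [abs_neg, abs_of_nonneg (Nat.cast_nonneg p)]
    rw [habs]
    have hcomp : (fun m : ℤ => Real.exp (-|((-(p:ℤ):ℤ):ℝ) - (m:ℝ)|) * Real.exp (-|(m:ℝ)|))
        = (fun m : ℤ => Real.exp (-|((p:ℕ):ℝ) - (m:ℝ)|) * Real.exp (-|(m:ℝ)|))
          ∘ (Equiv.neg ℤ) := by
      funext m
      simp only [Function.comp_apply, Equiv.neg_apply]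
      push_cast
      rw [show -(p:ℝ) - (m:ℝ) = -((p:ℝ) - (-m:ℝ)) by ring, abs_neg]
      rw [abs_neg]
    rw [hcomp]
    exact (Equiv.hasSum_iff (Equiv.neg ℤ)).mpr h


end Aux

/-- Instability of the stationary peakon `π_n = exp (-|n|)` for the discrete
Klein–Gordon lattice: there is `ε > 0` such that arbitrarily `ℓ²`-close to the
initial data `(π, 0)` there are initial data whose solution leaves the
`ε`-neighborhood of `π` at some positive time. -/
theorem kg_peakon_unstable
    (π : lp (fun _ : ℤ => ℝ) 2) (hπ : ∀ n : ℤ, π n = Real.exp (-|(n : ℝ)|)) :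
    ∃ ε : ℝ, 0 < ε ∧ ∀ δ : ℝ, 0 < δ →
      ∃ u : ℝ → lp (fun _ : ℤ => ℝ) 2,
        IsKGSolution u ∧
        ‖u 0 - π‖ + ‖derivWithin u (Set.Ici 0) 0‖ < δ ∧
        ∃ t : ℝ, 0 < t ∧ ε ≤ ‖u t - π‖ := by
  have hπne : π ≠ 0 := by
    intro h
    have h0 := hπ 0
    rw [h] at h0
    rw [lp.coeFn_zero] at h0
    simp at h0
  have hπpos : 0 < ‖π‖ := norm_pos_iff.mpr hπne
  refine ⟨‖π‖, hπpos, fun δ hδ => ?_⟩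
  set β : ℝ := δ / (2 * (‖π‖ + 1)) with hβdef
  have hβ : 0 < β := by positivity
  set a : ℝ → ℝ := aF β hβ with hadef
  set u : ℝ → lp (fun _ : ℤ => ℝ) 2 := fun t => a t • π with hudef
  have hu_dw : ∀ t ∈ Set.Ici (0:ℝ), derivWithin u (Set.Ici 0) t
      = Real.sqrt (Qf β (a t)) • π := by
    intro t ht
    have h := ((hasDerivAt_aF' hβ ht).smul_const π).hasDerivWithinAt
      (s := Set.Ici (0:ℝ))
    exact h.derivWithin (uniqueDiffOn_Ici 0 t ht)
  have hu_ddw : ∀ t ∈ Set.Ici (0:ℝ),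
      derivWithin (fun s => derivWithin u (Set.Ici 0) s) (Set.Ici 0) t
        = (a t * Real.log (a t)) • π := by
    intro t ht
    have hw : HasDerivAt (fun s => Real.sqrt (Qf β (a s)) • π)
        ((a t * Real.log (a t)) • π) t := (hasDerivAt_phi hβ ht).smul_const π
    have h2 : HasDerivWithinAt (fun s => derivWithin u (Set.Ici 0) s)
        ((a t * Real.log (a t)) • π) (Set.Ici 0) t :=
      hw.hasDerivWithinAt.congr (fun y hy => hu_dw y hy) (hu_dw t ht)
    exact h2.derivWithin (uniqueDiffOn_Ici 0 t ht)
  have hsm : ContDiffOn ℝ 2 u (Set.Ici 0) := by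
    have hCLM : ContDiff ℝ 2 (fun x : ℝ => x • π) := by
      have heq : (fun x : ℝ => x • π) = fun x : ℝ =>
          (ContinuousLinearMap.id ℝ ℝ).smulRight π x := by
        funext x; simp
      rw [heq]
      exact (ContinuousLinearMap.smulRight (ContinuousLinearMap.id ℝ ℝ) π).contDiff
    have hconta : ContDiffOn ℝ 2 a (Set.Ici 0) := by
      have hud := uniqueDiffOn_Ici (0:ℝ)
      have h21 : ((2 : WithTop ℕ∞)) = 1 + 1 := by norm_num
      rw [h21, contDiffOn_succ_iff_derivWithin hud]
      refine ⟨fun t ht => ((hasDerivAt_aF hβ t).differentiableAt.differentiableWithinAt),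
        by simp, ?_⟩
      have hdw1 : ∀ t ∈ Set.Ici (0:ℝ), derivWithin a (Set.Ici 0) t
          = Real.sqrt (Qf β (a t)) := fun t ht =>
        ((hasDerivAt_aF' hβ ht).hasDerivWithinAt).derivWithin (uniqueDiffOn_Ici 0 t ht)
      apply ContDiffOn.congr (f := fun t => Real.sqrt (Qf β (a t))) _ hdw1
      rw [show ((1:WithTop ℕ∞)) = ((0:WithTop ℕ∞) + 1) by norm_num,
        contDiffOn_succ_iff_derivWithin hud]
      refine ⟨fun t ht => (hasDerivAt_phi hβ ht).differentiableAt.differentiableWithinAt,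
        by simp, ?_⟩
      rw [contDiffOn_zero]
      have hdw2 : ∀ t ∈ Set.Ici (0:ℝ),
          derivWithin (fun s => Real.sqrt (Qf β (a s))) (Set.Ici 0) t
            = a t * Real.log (a t) := fun t ht =>
        ((hasDerivAt_phi hβ ht).hasDerivWithinAt).derivWithin (uniqueDiffOn_Ici 0 t ht)
      apply ContinuousOn.congr (f := fun t => a t * Real.log (a t)) _ hdw2
      intro t ht
      have h1 : (1:ℝ) ≤ a t := aF_ge_one hβ ht
      exact ((continuous_aF hβ).continuousAt.mul
        ((Real.continuousAt_log (by linarith)).comp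
          (continuous_aF hβ).continuousAt)).continuousWithinAt
    exact hCLM.comp_contDiffOn hconta
  refine ⟨u, ⟨hsm, ?_⟩, ?_, Tf β 2, ?_, ?_⟩
  · intro t ht n
    rw [hu_ddw t ht]
    have ha1 : (1:ℝ) ≤ a t := aF_ge_one hβ ht
    have ha0 : (0:ℝ) < a t := by linarith
    have hcoord : ∀ (c : ℝ), ((c • π : lp (fun _ : ℤ => ℝ) 2) : ℤ → ℝ) n = c * π n := by
      intro c; rw [lp.coeFn_smul]; simp
    have hπn : (π : ℤ → ℝ) n = Real.exp (-|(n:ℝ)|) := hπ n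
    have hU : ∀ m : ℤ, (u t : ℤ → ℝ) m = a t * Real.exp (-|(m:ℝ)|) := by
      intro m
      show ((a t • π : lp (fun _ : ℤ => ℝ) 2) : ℤ → ℝ) m = _
      rw [lp.coeFn_smul]
      simp [hπ m]
    have hts : (∑' m : ℤ, Real.exp (-|(n : ℝ) - (m : ℝ)|) * (u t : ℤ → ℝ) m)
        = a t * ((Lam + |(n:ℝ)|) * Real.exp (-|(n:ℝ)|)) := by
      have h := (keyZ n).mul_left (a t)
      have heq : (fun m : ℤ => Real.exp (-|(n : ℝ) - (m : ℝ)|) * (u t : ℤ → ℝ) m)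
          = fun m : ℤ => a t * (Real.exp (-|(n:ℝ) - (m:ℝ)|) * Real.exp (-|(m:ℝ)|)) := by
        funext m; rw [hU m]; ring
      rw [heq]
      exact h.tsum_eq
    rw [hcoord, hts, hU n]
    have hlog : Real.log ((a t * Real.exp (-|(n:ℝ)|)) ^ 2)
        = 2 * (Real.log (a t) - |(n:ℝ)|) := by
      rw [Real.log_pow, Real.log_mul ha0.ne' (Real.exp_ne_zero _), Real.log_exp]
      push_cast; ring
    rw [hlog, hπn]
    ring
  · have h0 : u 0 = π := by
      show a 0 • π = π
      rw [show a 0 = 1 from aF_zero hβ, one_smul]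
    have hd0 : derivWithin u (Set.Ici 0) 0 = β • π := by
      rw [hu_dw 0 (by simp), show a 0 = 1 from aF_zero hβ, Qf_one,
        Real.sqrt_sq hβ.le]
    rw [h0, hd0, sub_self, norm_zero, zero_add, norm_smul]
    rw [Real.norm_eq_abs, abs_of_pos hβ, hβdef]
    rw [div_mul_eq_mul_div, div_lt_iff₀ (by positivity)]
    nlinarith
  · have h12 := strictMono_Tf hβ (show (1:ℝ) < 2 by norm_num)
    rwa [Tf_one] at h12
  · have ha2 : a (Tf β 2) = 2 := aF_Tf hβ 2
    have hsub : u (Tf β 2) - π = π := by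
      show a (Tf β 2) • π - π = π
      rw [ha2, two_smul]
      abel
    rw [hsub]
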